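/- Graph-theoretic sampling lemma (Lemma 1): Given a factor graph G = (F, Θ, E) with only unary and pairwise factors and an elimination order θ_1,…,θ_n, suppose for every j either (a) there exists a unary factor f(θ_j) ∈ F, or (b) there exists i < j with a pairwise factor f(θ_i, θ_j) ∈ F. Then for every j, the reduced factor set F_{j-1}(θ_j) at the time θ_j is eliminated contains a factor in which θ_j appears and which admits direct sampling of θ_j, i.e., either a unary factor on θ_j or a factor whose other arguments have already been instantiated by samples. -/
import Mathlib


open Finset

/-- A *composite factor* is modelled as the set of original factors whose product it
is; an original factor is modelled as the finite set of variable indices it involves.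
Eliminating variable `j` removes all composites adjacent to `j` and merges them
(together with samples of `j`) into a single new composite connected to the
separator. -/
def elimStep (C : Finset (Finset (Finset ℕ))) (j : ℕ) : Finset (Finset (Finset ℕ)) :=
  C.filter (fun c => j ∉ c.sup id) ∪ {(C.filter (fun c => j ∈ c.sup id)).sup id}

/-- The sequence of factor sets produced by eliminating variables `0, 1, 2, …` in
order: `factorSeq F j` is the factor set `F_{j-1}` present just before variable `j`
is eliminated (`factorSeq F 0 = F` is the original factor graph, each original
factor being its own composite). -/
def factorSeq (F : Finset (Finset ℕ)) : ℕ → Finset (Finset (Finset ℕ))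
  | 0 => F.image (fun f => {f})
  | j + 1 => elimStep (factorSeq F j) j

/-- Original factors persist inside some composite at every stage. -/
lemma factor_persists (F : Finset (Finset ℕ)) (f : Finset ℕ) (hf : f ∈ F) :
    ∀ k, ∃ c ∈ factorSeq F k, f ∈ c := by
  intro k
  induction k with
  | zero =>
    exact ⟨{f}, Finset.mem_image_of_mem _ hf, Finset.mem_singleton_self f⟩
  | succ j ih =>
    obtain ⟨c, hc, hfc⟩ := ih
    by_cases h : j ∈ c.sup id
    · refine ⟨(((factorSeq F j)).filter (fun c => j ∈ c.sup id)).sup id, ?_, ?_⟩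
      · exact Finset.mem_union_right _ (Finset.mem_singleton_self _)
      · exact (Finset.le_sup (f := id) (Finset.mem_filter.mpr ⟨hc, h⟩) : c ≤ _) hfc
    · exact ⟨c, Finset.mem_union_left _ (Finset.mem_filter.mpr ⟨hc, h⟩), hfc⟩

/-- **Graph-theoretic sampling lemma.**  Given a factor graph with `n` variables
`0,…,n-1` and only unary and pairwise factors, eliminated in the order `0,1,…,n-1`,
suppose every variable `j` either has a unary factor `{j}` or has a pairwise factor
`{i, j}` with a previously eliminated variable `i < j`.  Then at the time `j` is
eliminated, the reduced factor set contains (inside one of its composites) an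
original factor in which `j` appears and all of whose other arguments have already
been eliminated — hence instantiated by samples — so `j` can be sampled directly
from it. -/
theorem sampling_lemma
    (n : ℕ) (F : Finset (Finset ℕ))
    (hvars : ∀ f ∈ F, ∀ v ∈ f, v < n)
    (hcard : ∀ f ∈ F, f.card ≤ 2 ∧ f.Nonempty)
    (hsample : ∀ j < n, ({j} : Finset ℕ) ∈ F ∨ ∃ i < j, ({i, j} : Finset ℕ) ∈ F) :
    ∀ j < n, ∃ c ∈ factorSeq F j, ∃ f ∈ c, j ∈ f ∧ ∀ v ∈ f, v ≤ j := by
  intro j hj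
  rcases hsample j hj with h | ⟨i, hij, h⟩
  · obtain ⟨c, hc, hfc⟩ := factor_persists F _ h j
    exact ⟨c, hc, {j}, hfc, Finset.mem_singleton_self j, by simp⟩
  · obtain ⟨c, hc, hfc⟩ := factor_persists F _ h j
    refine ⟨c, hc, {i, j}, hfc, by simp, ?_⟩
    intro v hv
    rcases Finset.mem_insert.mp hv with rfl | hv
    · exact le_of_lt hij
    · simp_all
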